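/- Let λ, μ, ν be partitions and a, b ≥ 0 integers. Then c(λ+(1^{a+b}); μ+(1^a), ν+(1^b)) ≥ c(λ;μ,ν), where (1^a) denotes the partition consisting of a parts equal to 1. -/

import Mathlib

/-- A partition: a weakly decreasing sequence of naturals with finitely many
nonzero terms.  `parts i` is the `(i+1)`-st part `λ_{i+1}`. -/
structure LRPartition where
  parts : ℕ → ℕ
  antitone' : ∀ ⦃i j : ℕ⦄, i ≤ j → parts j ≤ parts i
  eventually_zero : ∃ N, ∀ i, N ≤ i → parts i = 0

namespace LRPartition

/-- Componentwise sum `λ + μ`. -/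
def add (a b : LRPartition) : LRPartition where
  parts i := a.parts i + b.parts i
  antitone' := fun _ _ h => Nat.add_le_add (a.antitone' h) (b.antitone' h)
  eventually_zero := by
    obtain ⟨M, hM⟩ := a.eventually_zero
    obtain ⟨N, hN⟩ := b.eventually_zero
    refine ⟨max M N, fun i hi => ?_⟩
    show a.parts i + b.parts i = 0
    rw [hM i (le_trans (le_max_left M N) hi), hN i (le_trans (le_max_right M N) hi)]

instance : Add LRPartition := ⟨add⟩

@[simp] theorem add_parts (a b : LRPartition) (i : ℕ) :
    (a + b).parts i = a.parts i + b.parts i := rfl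

/-- The stretched partition `n • λ = (nλ₁, nλ₂, …)`. -/
def stretch (n : ℕ) (a : LRPartition) : LRPartition where
  parts i := n * a.parts i
  antitone' := fun _ _ h => Nat.mul_le_mul_left n (a.antitone' h)
  eventually_zero := by
    obtain ⟨N, hN⟩ := a.eventually_zero
    exact ⟨N, fun i hi => by show n * a.parts i = 0; rw [hN i hi, Nat.mul_zero]⟩

instance : SMul ℕ LRPartition := ⟨stretch⟩

@[simp] theorem smul_parts (n : ℕ) (a : LRPartition) (i : ℕ) :
    (n • a).parts i = n * a.parts i := rfl

/-- Containment of Young diagrams: `μ ⊆ λ` iff `μᵢ ≤ λᵢ` for all `i`. -/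
def Sub (m l : LRPartition) : Prop := ∀ i, m.parts i ≤ l.parts i

/-- The number of (nonzero) parts, `l(λ)`. -/
noncomputable def length (a : LRPartition) : ℕ := {i | a.parts i ≠ 0}.ncard

end LRPartition

/-- `u = λ ∪ λ'`: the multiset of (positive) parts of `u` is the multiset union of
those of `λ` and `λ'`, expressed via multiplicities of every positive value `t`. -/
def IsUnion (a b u : LRPartition) : Prop :=
  ∀ t : ℕ, 0 < t →
    {i | u.parts i = t}.ncard = {i | a.parts i = t}.ncard + {i | b.parts i = t}.ncard

/-- The cells of the skew diagram `λ/μ`: boxes `(i, j)` (row `i`, column `j`,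
both 0-indexed) with `μ_{i+1} ≤ j < λ_{i+1}`. -/
def skewCells (l m : LRPartition) : Set (ℕ × ℕ) :=
  {p | m.parts p.1 ≤ p.2 ∧ p.2 < l.parts p.1}

/-- `T` is a Littlewood–Richardson tableau of shape `λ/μ` and content `ν`.
`T (i, j)` records the entry in box `(i, j)`; boxes carry positive integers and `T`
vanishes off the diagram.  Rows weakly increase, columns strictly increase, the entry
`k + 1` occurs `ν_{k+1} = ν.parts k` times, and the lattice-word condition on the
reverse reading word is expressed via its initial segments: for every `r c`, the
cells read up to position `(r, c)` are exactly those in rows `< r` together with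
those in row `r` in columns `≥ c`. -/
structure IsLRTableau (l m n : LRPartition) (T : ℕ × ℕ → ℕ) : Prop where
  sub : LRPartition.Sub m l
  pos : ∀ p ∈ skewCells l m, 0 < T p
  zero : ∀ p, p ∉ skewCells l m → T p = 0
  row_weak : ∀ i j j', (i, j) ∈ skewCells l m → (i, j') ∈ skewCells l m →
    j ≤ j' → T (i, j) ≤ T (i, j')
  col_strict : ∀ i i' j, (i, j) ∈ skewCells l m → (i', j) ∈ skewCells l m →
    i < i' → T (i, j) < T (i', j)
  content : ∀ k : ℕ, {p ∈ skewCells l m | T p = k + 1}.ncard = n.parts k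
  lattice : ∀ r c k : ℕ, 0 < k →
    {p ∈ skewCells l m | (p.1 < r ∨ (p.1 = r ∧ c ≤ p.2)) ∧ T p = k + 1}.ncard ≤
      {p ∈ skewCells l m | (p.1 < r ∨ (p.1 = r ∧ c ≤ p.2)) ∧ T p = k}.ncard

/-- The Littlewood–Richardson coefficient `c(λ; μ, ν)`: the number of LR tableaux of
shape `λ/μ` and content `ν` (zero when `μ ⊄ λ`). -/
noncomputable def LRcoeff (l m n : LRPartition) : ℕ :=
  Set.ncard {T : ℕ × ℕ → ℕ | IsLRTableau l m n T}

/-- `λ/μ` is a partition shape: `μᵢ = 0` in every nonempty row. -/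
def IsPartitionShape (l m : LRPartition) : Prop :=
  ∀ i, m.parts i < l.parts i → m.parts i = 0

/-- `λ/μ` is a rotated partition shape: `λᵢ` takes the same value in all nonempty rows. -/
def IsRotatedShape (l m : LRPartition) : Prop :=
  ∀ i j, m.parts i < l.parts i → m.parts j < l.parts j → l.parts i = l.parts j

/-- A proper skew diagram: neither a partition shape nor a rotated partition. -/
def IsProperSkew (l m : LRPartition) : Prop :=
  ¬ IsPartitionShape l m ∧ ¬ IsRotatedShape l m

/-- `λ/μ` is a basic skew diagram: `μᵢ < λᵢ` and `μᵢ ≤ λ_{i+1}` for each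
`1 ≤ i ≤ l(λ)` (no empty rows or columns). -/
def IsBasicSkew (l m : LRPartition) : Prop :=
  ∀ i, 0 < l.parts i → m.parts i < l.parts i ∧ m.parts i ≤ l.parts (i + 1)

/-- `Q^{λ,μ}_{λ',μ'}(n) = Σ_ν c(nλ+λ'; nμ+μ', ν)`, the sum over all partitions `ν`. -/
noncomputable def Qfun (l m l' m' : LRPartition) (n : ℕ) : ℕ :=
  ∑ᶠ ν : LRPartition, LRcoeff (n • l + l') (n • m + m') ν

/-- `P^{λ,μ,ν}_{λ',μ',ν'}(n) = c(nλ+λ'; nμ+μ', nν+ν')`. -/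
noncomputable def Pfun (l m nu l' m' nu' : LRPartition) (n : ℕ) : ℕ :=
  LRcoeff (n • l + l') (n • m + m') (n • nu + nu')

/-- The partition `(1^a)` consisting of `a` parts equal to `1`. -/
def onesPartition (a : ℕ) : LRPartition where
  parts i := if i < a then 1 else 0
  antitone' := by intro i j h; split_ifs <;> omega
  eventually_zero := ⟨a, fun i hi => by split_ifs <;> omega⟩

/-- The partition `(a)` with a single part `a` (the empty partition if `a = 0`). -/
def singlePartition (a : ℕ) : LRPartition where
  parts i := if i = 0 then a else 0
  antitone' := by intro i j h; split_ifs <;> omega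
  eventually_zero := ⟨1, fun i hi => by split_ifs <;> omega⟩

/-!
Starting from an LR tableau of shape `λ/μ`, shift rows `0, …, a - 1` one box to the right and,
for `t < b`, insert an entry `t + 1` into row `a + t` just before the first entry exceeding
`t + 1`. Rows stay weakly increasing by the choice of the insertion column. Columns stay
strictly increasing because every entry left of the insertion column in row `a + t` is at most
`t + 1`, while every entry right of it is at least `t + 2`; shifting the rows above row `a`
ensures that no entry lies directly above the inserted `1`. The new entries `1, …, b` are read
in this order, one per row, so the lattice property survives, and the content grows by `(1^b)`.
The insertion columns can be read off the new tableau, so the construction is injective.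
-/

@[simp] lemma onesPartition_parts (a i : ℕ) :
    (onesPartition a).parts i = if i < a then 1 else 0 := rfl

@[simp] lemma mem_skewCells {l m : LRPartition} {i j : ℕ} :
    (i, j) ∈ skewCells l m ↔ m.parts i ≤ j ∧ j < l.parts i := Iff.rfl

lemma skewCells_finite (l m : LRPartition) : (skewCells l m).Finite := by
  obtain ⟨N, hN⟩ := l.eventually_zero
  refine ((Set.finite_Iio N).prod (Set.finite_Iio (l.parts 0))).subset ?_
  rintro ⟨i, j⟩ ⟨-, hj : j < l.parts i⟩
  have := l.antitone' (Nat.zero_le i)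
  have hi : i < N := by
    by_contra! h
    rw [hN i h] at hj
    omega
  exact ⟨hi, by simp only [Set.mem_Iio]; omega⟩

lemma IsLRTableau.le_of_parts_eq_zero {l m n : LRPartition} {T : ℕ × ℕ → ℕ}
    (hT : IsLRTableau l m n T) {N : ℕ} (hN : ∀ k, N ≤ k → n.parts k = 0) (p : ℕ × ℕ) :
    T p ≤ N := by
  by_cases hp : p ∈ skewCells l m
  · by_contra! h
    have hne : {q ∈ skewCells l m | T q = (T p - 1) + 1}.Nonempty := ⟨p, hp, by omega⟩
    have := (Set.ncard_pos ((skewCells_finite l m).subset fun q hq => hq.1)).2 hne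
    rw [hT.content, hN _ (by omega)] at this
    exact this.false
  · rw [hT.zero p hp]
    exact Nat.zero_le N

lemma setOf_isLRTableau_finite (l m n : LRPartition) :
    {T : ℕ × ℕ → ℕ | IsLRTableau l m n T}.Finite := by
  obtain ⟨N, hN⟩ := n.eventually_zero
  have : Finite (skewCells l m) := (skewCells_finite l m).to_subtype
  refine Set.Finite.of_finite_image (f := fun T (q : skewCells l m) => T q)
    ((Set.Finite.pi fun _ => Set.finite_Iic N).subset ?_) ?_
  · rintro _ ⟨T, hT, rfl⟩ q -
    exact hT.le_of_parts_eq_zero hN q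
  · intro T₁ hT₁ T₂ hT₂ h
    funext p
    by_cases hp : p ∈ skewCells l m
    · exact congrFun h ⟨p, hp⟩
    · rw [hT₁.zero p hp, hT₂.zero p hp]

/-- `p` is read no later than `(r, c)` in the reverse reading word (rows right to left). -/
def IsReadUpTo (r c : ℕ) (p : ℕ × ℕ) : Prop := p.1 < r ∨ p.1 = r ∧ c ≤ p.2

namespace AddOnes

variable (l m : LRPartition) (a b : ℕ) (T : ℕ × ℕ → ℕ)

def insertCol (i : ℕ) : ℕ :=
  Nat.find (⟨l.parts i, Or.inl le_rfl⟩ : ∃ j, l.parts i ≤ j ∨ i - a + 2 ≤ T (i, j))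

open Classical in
noncomputable def filling (q : ℕ × ℕ) : ℕ :=
  if q ∈ skewCells (l + onesPartition (a + b)) (m + onesPartition a) then
    if q.1 < a then T (q.1, q.2 - 1)
    else if q.1 < a + b then
      if q.2 < insertCol l a T q.1 then T q
      else if q.2 = insertCol l a T q.1 then q.1 - a + 1
      else T (q.1, q.2 - 1)
    else T q
  else 0

def shiftCell (q : ℕ × ℕ) : ℕ × ℕ :=
  if q.1 < a ∨ q.1 < a + b ∧ insertCol l a T q.1 ≤ q.2 then (q.1, q.2 + 1) else q

def insertedCell (t : ℕ) : ℕ × ℕ := (a + t, insertCol l a T (a + t))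

def shiftedCol (r c : ℕ) : ℕ :=
  if r < a ∨ r < a + b ∧ insertCol l a T r < c then c - 1 else c

variable {l m a b T} {n : LRPartition}

lemma insertCol_le (i : ℕ) : insertCol l a T i ≤ l.parts i :=
  Nat.find_le (Or.inl le_rfl)

lemma insertCol_spec (i : ℕ) :
    l.parts i ≤ insertCol l a T i ∨ i - a + 2 ≤ T (i, insertCol l a T i) :=
  Nat.find_spec (⟨l.parts i, Or.inl le_rfl⟩ : ∃ j, l.parts i ≤ j ∨ i - a + 2 ≤ T (i, j))

lemma apply_le_of_lt_insertCol {i j : ℕ} (h : j < insertCol l a T i) :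
    T (i, j) ≤ i - a + 1 := by
  have := Nat.find_min _ h
  simp only [not_or, not_le] at this
  omega

lemma le_insertCol (hT : IsLRTableau l m n T) (i : ℕ) : m.parts i ≤ insertCol l a T i := by
  by_contra! h
  rcases insertCol_spec (l := l) (a := a) (T := T) i with h' | h'
  · have := hT.sub i
    omega
  · rw [hT.zero _ (by simp only [mem_skewCells]; omega)] at h'
    omega

lemma lt_apply_of_insertCol_le (hT : IsLRTableau l m n T) {i j : ℕ}
    (h₁ : insertCol l a T i ≤ j) (h₂ : j < l.parts i) : i - a + 1 < T (i, j) := by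
  have hc := le_insertCol (a := a) hT i
  have hspec := (insertCol_spec (l := l) (a := a) (T := T) i).resolve_left (by omega)
  have := hT.row_weak i _ j (by simp only [mem_skewCells]; omega)
    (by simp only [mem_skewCells]; omega) h₁
  omega

lemma mem_skewCells_add_ones {i j : ℕ} :
    (i, j) ∈ skewCells (l + onesPartition (a + b)) (m + onesPartition a) ↔
      i < a ∧ m.parts i < j ∧ j ≤ l.parts i ∨
      a ≤ i ∧ i < a + b ∧ m.parts i ≤ j ∧ j ≤ l.parts i ∨
      a + b ≤ i ∧ m.parts i ≤ j ∧ j < l.parts i := by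
  simp only [mem_skewCells, LRPartition.add_parts, onesPartition_parts]
  split_ifs <;> omega

lemma filling_cases (hT : IsLRTableau l m n T) {i j : ℕ}
    (hq : (i, j) ∈ skewCells (l + onesPartition (a + b)) (m + onesPartition a)) :
    filling l m a b T (i, j) = T (i, j - 1) ∧ (m.parts i ≤ j - 1 ∧ j - 1 < l.parts i) ∧
        0 < j ∧ (i < a ∨ i < a + b ∧ insertCol l a T i < j) ∨
      filling l m a b T (i, j) = T (i, j) ∧ (m.parts i ≤ j ∧ j < l.parts i) ∧
        (a + b ≤ i ∨ a ≤ i ∧ j < insertCol l a T i) ∨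
      filling l m a b T (i, j) = i - a + 1 ∧ a ≤ i ∧ i < a + b ∧ j = insertCol l a T i := by
  have hc := insertCol_le (l := l) (a := a) (T := T) i
  have hc' := le_insertCol (a := a) hT i
  have hmem := mem_skewCells_add_ones.1 hq
  rw [filling, if_pos hq]
  dsimp only
  split_ifs <;> omega

lemma filling_pos (hT : IsLRTableau l m n T) {i j : ℕ}
    (hq : (i, j) ∈ skewCells (l + onesPartition (a + b)) (m + onesPartition a)) :
    0 < filling l m a b T (i, j) := by
  rcases filling_cases hT hq with ⟨e, hc, -⟩ | ⟨e, hc, -⟩ | ⟨e, -⟩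
  · exact e ▸ hT.pos _ (mem_skewCells.2 hc)
  · exact e ▸ hT.pos _ (mem_skewCells.2 hc)
  · omega

lemma filling_row_weak (hT : IsLRTableau l m n T) (i j j' : ℕ)
    (h : (i, j) ∈ skewCells (l + onesPartition (a + b)) (m + onesPartition a))
    (h' : (i, j') ∈ skewCells (l + onesPartition (a + b)) (m + onesPartition a))
    (hjj : j ≤ j') : filling l m a b T (i, j) ≤ filling l m a b T (i, j') := by
  rcases filling_cases hT h with ⟨e, hc, hj, hr⟩ | ⟨e, hc, hr⟩ | ⟨e, hr⟩ <;>
    rcases filling_cases hT h' with ⟨e', hc', hj', hr'⟩ | ⟨e', hc', hr'⟩ | ⟨e', hr'⟩ <;>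
    rw [e, e']
  · exact hT.row_weak _ _ _ (mem_skewCells.2 hc) (mem_skewCells.2 hc') (by omega)
  · omega
  · omega
  · exact hT.row_weak _ _ _ (mem_skewCells.2 hc) (mem_skewCells.2 hc') (by omega)
  · exact hT.row_weak _ _ _ (mem_skewCells.2 hc) (mem_skewCells.2 hc') hjj
  · exact apply_le_of_lt_insertCol (l := l) (by omega)
  · exact (lt_apply_of_insertCol_le (a := a) hT (by omega) hc'.2).le
  · omega

lemma filling_col_strict (hT : IsLRTableau l m n T) (i i' j : ℕ)
    (h : (i, j) ∈ skewCells (l + onesPartition (a + b)) (m + onesPartition a))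
    (h' : (i', j) ∈ skewCells (l + onesPartition (a + b)) (m + onesPartition a))
    (hii : i < i') : filling l m a b T (i, j) < filling l m a b T (i', j) := by
  have hl := l.antitone' hii.le
  have hm := m.antitone' hii.le
  rcases filling_cases hT h with ⟨e, hc, hj, hr⟩ | ⟨e, hc, hr⟩ | ⟨e, hr⟩ <;>
    rcases filling_cases hT h' with ⟨e', hc', hj', hr'⟩ | ⟨e', hc', hr'⟩ | ⟨e', hr'⟩ <;>
    rw [e, e']
  · exact hT.col_strict _ _ _ (mem_skewCells.2 hc) (mem_skewCells.2 hc') hii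
  · have hrow : (i, j) ∈ skewCells l m := mem_skewCells.2 ⟨by omega, by omega⟩
    exact (hT.row_weak _ _ _ (mem_skewCells.2 hc) hrow (by omega)).trans_lt
      (hT.col_strict _ _ _ hrow (mem_skewCells.2 hc') hii)
  · have := insertCol_le (l := l) (a := a) (T := T) i'
    have := apply_le_of_lt_insertCol (l := l) (a := a) (T := T) (i := i') (j := j - 1) (by omega)
    have := hT.col_strict _ _ _ (mem_skewCells.2 hc) (mem_skewCells.2 ⟨by omega, by omega⟩) hii
    omega
  · have := lt_apply_of_insertCol_le (a := a) hT (i := i') (j := j - 1) (by omega) hc'.2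
    have := apply_le_of_lt_insertCol (l := l) (a := a) (T := T) (i := i) (j := j) (by omega)
    omega
  · exact hT.col_strict _ _ _ (mem_skewCells.2 hc) (mem_skewCells.2 hc') hii
  · have := apply_le_of_lt_insertCol (l := l) (a := a) (T := T) (i := i) (j := j) (by omega)
    omega
  · have := lt_apply_of_insertCol_le (a := a) hT (i := i') (j := j - 1) (by omega) hc'.2
    omega
  · have := le_insertCol (a := a) hT i
    have hrow : (i, j) ∈ skewCells l m := mem_skewCells.2 ⟨by omega, by omega⟩
    have := lt_apply_of_insertCol_le (a := a) hT (i := i) (j := j) (by omega) (by omega)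
    have := hT.col_strict _ _ _ hrow (mem_skewCells.2 hc') hii
    omega
  · omega

lemma shiftCell_injective : Function.Injective (shiftCell l a b T) := by
  rintro ⟨i, j⟩ ⟨i', j'⟩ h
  simp only [shiftCell] at h
  split_ifs at h <;> obtain ⟨rfl, h⟩ := Prod.mk.inj h <;> ext <;> dsimp only <;> omega

lemma shiftCell_mem {q : ℕ × ℕ} (hq : q ∈ skewCells l m) :
    shiftCell l a b T q ∈ skewCells (l + onesPartition (a + b)) (m + onesPartition a) := by
  obtain ⟨i, j⟩ := q
  have := mem_skewCells.1 hq
  simp only [shiftCell]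
  split_ifs <;> exact mem_skewCells_add_ones.2 (by omega)

lemma filling_shiftCell (hT : IsLRTableau l m n T) {q : ℕ × ℕ} (hq : q ∈ skewCells l m) :
    filling l m a b T (shiftCell l a b T q) = T q := by
  obtain ⟨i, j⟩ := q
  have hmem := shiftCell_mem (a := a) (b := b) (T := T) hq
  simp only [shiftCell] at hmem ⊢
  split_ifs at hmem ⊢ with h
  · rcases filling_cases hT hmem with ⟨e, -⟩ | ⟨-, -, hr⟩ | ⟨-, hr⟩
    · simpa using e
    · omega
    · omega
  · rcases filling_cases hT hmem with ⟨-, -, -, hr⟩ | ⟨e, -⟩ | ⟨-, hr⟩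
    · omega
    · exact e
    · omega

lemma insertedCell_mem (hT : IsLRTableau l m n T) {t : ℕ} (ht : t < b) :
    insertedCell l a T t ∈ skewCells (l + onesPartition (a + b)) (m + onesPartition a) := by
  have := insertCol_le (l := l) (a := a) (T := T) (a + t)
  have := le_insertCol (a := a) hT (a + t)
  exact mem_skewCells_add_ones.2 (by omega)

lemma filling_insertedCell (hT : IsLRTableau l m n T) {t : ℕ} (ht : t < b) :
    filling l m a b T (insertedCell l a T t) = t + 1 := by
  rcases filling_cases (a := a) (b := b) hT (i := a + t) (insertedCell_mem hT ht) with
    ⟨-, -, -, hr⟩ | ⟨-, -, hr⟩ | ⟨e, -⟩ <;> simp only [insertedCell] <;> omega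

lemma shiftCell_ne_insertedCell (q : ℕ × ℕ) {t : ℕ} (ht : t < b) :
    shiftCell l a b T q ≠ insertedCell l a T t := by
  obtain ⟨i, j⟩ := q
  simp only [shiftCell, insertedCell]
  split_ifs <;> intro h <;> obtain ⟨rfl, h⟩ := Prod.mk.inj h <;> omega

lemma skewCells_add_ones_eq (hT : IsLRTableau l m n T) :
    skewCells (l + onesPartition (a + b)) (m + onesPartition a) =
      shiftCell l a b T '' skewCells l m ∪ insertedCell l a T '' Set.Iio b := by
  refine Set.Subset.antisymm (fun ⟨i, j⟩ hq => ?_) ?_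
  · rcases filling_cases hT hq with ⟨-, hc, hj, hr⟩ | ⟨-, hc, hr⟩ | ⟨-, hr⟩
    · refine Or.inl ⟨(i, j - 1), mem_skewCells.2 hc, ?_⟩
      simp only [shiftCell]
      rw [if_pos (by omega), Nat.sub_add_cancel hj]
    · refine Or.inl ⟨(i, j), mem_skewCells.2 hc, ?_⟩
      simp only [shiftCell]
      rw [if_neg (by omega)]
    · refine Or.inr ⟨i - a, Set.mem_Iio.2 (by omega), ?_⟩
      simp only [insertedCell]
      rw [Nat.add_sub_cancel' hr.1, hr.2.2]
  · rintro _ (⟨q, hq, rfl⟩ | ⟨t, ht, rfl⟩)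
    · exact shiftCell_mem hq
    · exact insertedCell_mem hT ht

lemma ncard_sep_skewCells_add_ones (hT : IsLRTableau l m n T) (P : ℕ × ℕ → Prop) :
    {p ∈ skewCells (l + onesPartition (a + b)) (m + onesPartition a) | P p}.ncard =
      {q ∈ skewCells l m | P (shiftCell l a b T q)}.ncard +
        {t ∈ Set.Iio b | P (insertedCell l a T t)}.ncard := by
  have hinj : Function.Injective (insertedCell l a T) := fun t t' h => by
    simpa [insertedCell] using congrArg Prod.fst h
  have hsplit : {p ∈ skewCells (l + onesPartition (a + b)) (m + onesPartition a) | P p} =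
      shiftCell l a b T '' {q ∈ skewCells l m | P (shiftCell l a b T q)} ∪
        insertedCell l a T '' {t ∈ Set.Iio b | P (insertedCell l a T t)} := by
    rw [skewCells_add_ones_eq hT]
    ext p
    constructor
    · rintro ⟨⟨q, hq, rfl⟩ | ⟨t, ht, rfl⟩, hp⟩
      exacts [Or.inl ⟨q, ⟨hq, hp⟩, rfl⟩, Or.inr ⟨t, ⟨ht, hp⟩, rfl⟩]
    · rintro (⟨q, ⟨hq, hp⟩, rfl⟩ | ⟨t, ⟨ht, hp⟩, rfl⟩)
      exacts [⟨Or.inl ⟨q, hq, rfl⟩, hp⟩, ⟨Or.inr ⟨t, ht, rfl⟩, hp⟩]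
  have hdisj : Disjoint (shiftCell l a b T '' {q ∈ skewCells l m | P (shiftCell l a b T q)})
      (insertedCell l a T '' {t ∈ Set.Iio b | P (insertedCell l a T t)}) := by
    rw [Set.disjoint_left]
    rintro _ ⟨q, -, rfl⟩ ⟨t, ⟨ht, -⟩, he⟩
    exact shiftCell_ne_insertedCell q ht he.symm
  rw [hsplit, Set.ncard_union_eq hdisj
      (((skewCells_finite l m).subset fun q hq => hq.1).image _)
      (((Set.finite_Iio b).subset fun t ht => ht.1).image _),
    Set.ncard_image_of_injective _ shiftCell_injective, Set.ncard_image_of_injective _ hinj]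

open Classical in
lemma ncard_filling_eq (hT : IsLRTableau l m n T) (P : ℕ × ℕ → Prop) (k : ℕ) :
    {p ∈ skewCells (l + onesPartition (a + b)) (m + onesPartition a) |
        P p ∧ filling l m a b T p = k + 1}.ncard =
      {q ∈ skewCells l m | P (shiftCell l a b T q) ∧ T q = k + 1}.ncard +
        if k < b ∧ P (insertedCell l a T k) then 1 else 0 := by
  rw [ncard_sep_skewCells_add_ones hT]
  congr 1
  · congr 1
    ext q
    exact and_congr_right fun hq => by rw [filling_shiftCell hT hq]
  · have hval : ∀ t < b, filling l m a b T (insertedCell l a T t) = k + 1 ↔ t = k :=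
      fun t ht => by rw [filling_insertedCell hT ht, Nat.add_right_cancel_iff]
    split_ifs with h
    · convert Set.ncard_singleton k
      ext t
      refine ⟨fun ⟨ht, _, hv⟩ => (hval t ht).1 hv, fun ht => ?_⟩
      rw [Set.mem_singleton_iff.1 ht]
      exact ⟨h.1, h.2, (hval k h.1).2 rfl⟩
    · convert Set.ncard_empty ℕ
      ext t
      refine ⟨fun ⟨ht, hP, hv⟩ => ?_, False.elim⟩
      obtain rfl := (hval t ht).1 hv
      exact h ⟨ht, hP⟩

lemma filling_content (hT : IsLRTableau l m n T) (k : ℕ) :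
    {p ∈ skewCells (l + onesPartition (a + b)) (m + onesPartition a) |
        filling l m a b T p = k + 1}.ncard = (n + onesPartition b).parts k := by
  have h := ncard_filling_eq (a := a) (b := b) hT (fun _ => True) k
  simp only [true_and, and_true] at h
  rw [h, hT.content, LRPartition.add_parts, onesPartition_parts]

lemma isReadUpTo_shiftCell_iff {r c : ℕ} {q : ℕ × ℕ} :
    IsReadUpTo r c (shiftCell l a b T q) ↔ IsReadUpTo r (shiftedCol l a b T r c) q := by
  obtain ⟨i, j⟩ := q
  simp only [IsReadUpTo, shiftCell, shiftedCol]
  rcases eq_or_ne i r with rfl | hi <;> split_ifs <;> dsimp only <;> omega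

lemma filling_lattice (hT : IsLRTableau l m n T) (r c k : ℕ) (hk : 0 < k) :
    {p ∈ skewCells (l + onesPartition (a + b)) (m + onesPartition a) |
        IsReadUpTo r c p ∧ filling l m a b T p = k + 1}.ncard ≤
      {p ∈ skewCells (l + onesPartition (a + b)) (m + onesPartition a) |
        IsReadUpTo r c p ∧ filling l m a b T p = k}.ncard := by
  obtain ⟨k, rfl⟩ := Nat.exists_eq_add_one_of_ne_zero hk.ne'
  rw [ncard_filling_eq hT (IsReadUpTo r c) (k + 1), ncard_filling_eq hT (IsReadUpTo r c) k]
  simp only [isReadUpTo_shiftCell_iff]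
  have hold :
      {q ∈ skewCells l m | IsReadUpTo r (shiftedCol l a b T r c) q ∧ T q = k + 1 + 1}.ncard ≤
        {q ∈ skewCells l m | IsReadUpTo r (shiftedCol l a b T r c) q ∧ T q = k + 1}.ncard :=
    hT.lattice r _ (k + 1) k.succ_pos
  have hnew : k + 1 < b ∧ IsReadUpTo r c (insertedCell l a T (k + 1)) →
      k < b ∧ IsReadUpTo r c (insertedCell l a T k) := by
    simp only [IsReadUpTo, insertedCell]
    omega
  split_ifs with h₁ h₂ <;> first | omega | exact absurd (hnew h₁) h₂

theorem filling_isLRTableau (hT : IsLRTableau l m n T) :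
    IsLRTableau (l + onesPartition (a + b)) (m + onesPartition a) (n + onesPartition b)
      (filling l m a b T) where
  sub i := by
    have := hT.sub i
    simp only [LRPartition.add_parts, onesPartition_parts]
    split_ifs <;> omega
  pos := fun _ hq => filling_pos hT hq
  zero p hp := by rw [filling, if_neg hp]
  row_weak := filling_row_weak hT
  col_strict := filling_col_strict hT
  content := filling_content hT
  lattice := filling_lattice hT

lemma insertCol_le_of_filling_eq {T₁ T₂ : ℕ × ℕ → ℕ} (hT₁ : IsLRTableau l m n T₁)
    (hT₂ : IsLRTableau l m n T₂) (h : filling l m a b T₁ = filling l m a b T₂) {i : ℕ}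
    (ha : a ≤ i) (hb : i < a + b) : insertCol l a T₁ i ≤ insertCol l a T₂ i := by
  by_contra! hlt
  have := insertCol_le (l := l) (a := a) (T := T₁) i
  have := le_insertCol (a := a) hT₂ i
  have hmem : (i, insertCol l a T₂ i + 1) ∈
      skewCells (l + onesPartition (a + b)) (m + onesPartition a) :=
    mem_skewCells_add_ones.2 (by omega)
  have h₁ : filling l m a b T₁ (i, insertCol l a T₂ i + 1) ≤ i - a + 1 := by
    rcases filling_cases hT₁ hmem with ⟨-, -, -, hr⟩ | ⟨e, -, hr⟩ | ⟨e, -⟩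
    · omega
    · rw [e]
      exact apply_le_of_lt_insertCol (l := l) (by omega)
    · omega
  have h₂ : i - a + 1 < filling l m a b T₂ (i, insertCol l a T₂ i + 1) := by
    rcases filling_cases hT₂ hmem with ⟨e, -⟩ | ⟨-, -, hr⟩ | ⟨-, -, -, hr⟩
    · exact e ▸ lt_apply_of_insertCol_le hT₂ (by omega) (by omega)
    · omega
    · omega
  rw [h] at h₁
  omega

lemma filling_injOn : Set.InjOn (filling l m a b) {T | IsLRTableau l m n T} := by
  intro T₁ hT₁ T₂ hT₂ h
  have hcol : ∀ i, a ≤ i → i < a + b → insertCol l a T₁ i = insertCol l a T₂ i :=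
    fun i ha hb => (insertCol_le_of_filling_eq hT₁ hT₂ h ha hb).antisymm
      (insertCol_le_of_filling_eq hT₂ hT₁ h.symm ha hb)
  have hshift : shiftCell l a b T₁ = shiftCell l a b T₂ := by
    funext ⟨i, j⟩
    by_cases hi : a ≤ i ∧ i < a + b
    · simp only [shiftCell, hcol i hi.1 hi.2]
    · simp only [shiftCell]
      split_ifs <;> first | rfl | omega
  funext q
  by_cases hq : q ∈ skewCells l m
  · rw [← filling_shiftCell hT₁ hq, ← filling_shiftCell hT₂ hq, h, hshift]
  · rw [hT₁.zero q hq, hT₂.zero q hq]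

end AddOnes

/-- Theorem 2.1, first part. For integers `a, b ≥ 0`,
`c(λ+(1^{a+b}); μ+(1^a), ν+(1^b)) ≥ c(λ;μ,ν)`. -/
theorem lr_add_ones (l m n : LRPartition) (a b : ℕ) :
    LRcoeff l m n ≤
      LRcoeff (l + onesPartition (a + b)) (m + onesPartition a) (n + onesPartition b) :=
  Set.ncard_le_ncard_of_injOn (AddOnes.filling l m a b)
    (fun _ hT => AddOnes.filling_isLRTableau hT) AddOnes.filling_injOn
    (setOf_isLRTableau_finite _ _ _)
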